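/- Let d ≥ 2 be an integer and n a real number with n > d/2 + 1. Then sup_{k ∈ Z^d_0} G_n(k) < ∞, where G_n(k) := Σ_{h∈Z^d_{0k}} |h ∧ k|² (|k|^n − |k−h|^n)² / (|h|^{2n+2} |k−h|^{2n}). -/

import Mathlib

noncomputable section

/-- Euclidean norm of a lattice point of `ℤ^d`. -/
def znorm {d : ℕ} (k : Fin d → ℤ) : ℝ := Real.sqrt (∑ i, ((k i : ℝ)) ^ 2)

/-- Squared norm `|h ∧ k|² = |h|²|k|² − (h·k)²` of the exterior product. -/
def wedgeSq {d : ℕ} (h k : Fin d → ℤ) : ℝ :=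
  (∑ i, ((h i : ℝ)) ^ 2) * (∑ i, ((k i : ℝ)) ^ 2) - (∑ i, (h i : ℝ) * (k i : ℝ)) ^ 2

/-- The function `G_n : ℤ^d_0 → [0,∞]` of the paper:
`G_n(k) = Σ_{h ∈ ℤ^d_{0k}} |h ∧ k|² (|k|^n − |k−h|^n)² / (|h|^{2n+2}|k−h|^{2n})`. -/
def Gn (d : ℕ) (n : ℝ) (k : Fin d → ℤ) : ENNReal :=
  ∑' h : {h : Fin d → ℤ // h ≠ 0 ∧ h ≠ k},
    ENNReal.ofReal (wedgeSq h.1 k * (znorm k ^ n - znorm (k - h.1) ^ n) ^ 2 /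
      (znorm h.1 ^ (2 * n + 2) * znorm (k - h.1) ^ (2 * n)))

/-!
With `a = |h|`, `b = |k - h|`, `c = |k|`, the triangle inequality gives `|c - b| ≤ a`, so the mean
value theorem bounds `|c^n - b^n|` by `n a (a + b)^(n-1)`; since `|h ∧ k| = |h ∧ (k - h)| ≤ a b`,
the summand of `G_n(k)` is at most `n² (1/a + 1/b)^(2n-2) ≲ |h|^(2-2n) + |k - h|^(2-2n)`.
Both resulting sums equal the lattice sum `Σ_h |h|^(2-2n)`, which does not depend on `k` and
converges because `2n - 2 > d`.
-/

lemma rpow_sub_rpow_le_of_le {x y p : ℝ} (hy : 0 ≤ y) (hyx : y ≤ x) (hp : 1 ≤ p) :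
    x ^ p - y ^ p ≤ p * (x - y) * x ^ (p - 1) := by
  rcases hyx.eq_or_lt with rfl | hlt
  · simp
  have hslope := (convexOn_rpow hp).slope_le_of_hasDerivAt hy (hy.trans hlt.le) hlt
    (Real.hasDerivAt_rpow_const (Or.inr hp))
  rw [slope_def_field, div_le_iff₀ (sub_pos.2 hlt)] at hslope
  linarith

lemma abs_rpow_sub_rpow_le {x y p : ℝ} (hx : 0 ≤ x) (hy : 0 ≤ y) (hp : 1 ≤ p) :
    |x ^ p - y ^ p| ≤ p * |x - y| * max x y ^ (p - 1) := by
  wlog hyx : y ≤ x generalizing x y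
  · rw [abs_sub_comm, abs_sub_comm x, max_comm]
    exact this hy hx (le_of_not_ge hyx)
  rw [abs_of_nonneg (sub_nonneg.2 (Real.rpow_le_rpow hy hyx (by linarith))),
    abs_of_nonneg (sub_nonneg.2 hyx), max_eq_left hyx]
  exact rpow_sub_rpow_le_of_le hy hyx hp

lemma add_rpow_le_two_rpow_mul_add_rpow {x y q : ℝ} (hx : 0 ≤ x) (hy : 0 ≤ y) (hq : 0 ≤ q) :
    (x + y) ^ q ≤ 2 ^ q * (x ^ q + y ^ q) := by
  calc (x + y) ^ q ≤ (2 * max x y) ^ q := by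
        gcongr
        linarith [le_max_left x y, le_max_right x y]
    _ = 2 ^ q * max x y ^ q := Real.mul_rpow zero_le_two (hx.trans (le_max_left x y))
    _ ≤ 2 ^ q * (x ^ q + y ^ q) := by
        gcongr
        rcases max_choice x y with h | h <;> rw [h] <;>
          linarith [Real.rpow_nonneg hx q, Real.rpow_nonneg hy q]

lemma mul_sq_rpow_sub_rpow_div_le {a b c p W : ℝ} (ha : 0 < a) (hb : 0 < b) (hc : 0 ≤ c)
    (hp : 1 ≤ p) (hcb : |c - b| ≤ a) (hW : W ≤ a ^ 2 * b ^ 2) :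
    W * (c ^ p - b ^ p) ^ 2 / (a ^ (2 * p + 2) * b ^ (2 * p)) ≤
      p ^ 2 * (a⁻¹ + b⁻¹) ^ (2 * p - 2) := by
  have hdiff : |c ^ p - b ^ p| ≤ p * a * (a + b) ^ (p - 1) := by
    refine (abs_rpow_sub_rpow_le hc hb.le hp).trans ?_
    have hmax : max c b ≤ a + b := max_le (by linarith [le_abs_self (c - b)]) (by linarith)
    gcongr
  have hsq : (c ^ p - b ^ p) ^ 2 ≤ p ^ 2 * a ^ 2 * (a + b) ^ (2 * p - 2) := by
    have hpow : ((a + b) ^ (p - 1)) ^ 2 = (a + b) ^ (2 * p - 2) := by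
      rw [← Real.rpow_natCast, ← Real.rpow_mul (by positivity)]
      ring_nf
    rw [← sq_abs, ← hpow]
    nlinarith [abs_nonneg (c ^ p - b ^ p)]
  have ha4 : a ^ (2 * p + 2) = a ^ (2 * p - 2) * a ^ 4 := by
    rw [← Real.rpow_natCast, ← Real.rpow_add ha]; norm_num; ring_nf
  have hb2 : b ^ (2 * p) = b ^ (2 * p - 2) * b ^ 2 := by
    rw [← Real.rpow_natCast, ← Real.rpow_add hb]; norm_num
  have hval : a ^ 2 * b ^ 2 * (p ^ 2 * a ^ 2 * (a + b) ^ (2 * p - 2)) /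
      (a ^ (2 * p + 2) * b ^ (2 * p)) = p ^ 2 * (a⁻¹ + b⁻¹) ^ (2 * p - 2) := by
    have hinv : a⁻¹ + b⁻¹ = (a + b) / (a * b) := by field_simp; ring
    rw [hinv, Real.div_rpow (by positivity) (by positivity), Real.mul_rpow ha.le hb.le, ha4, hb2]
    have := (Real.rpow_pos_of_pos ha (2 * p - 2)).ne'
    have := (Real.rpow_pos_of_pos hb (2 * p - 2)).ne'
    field_simp
  calc W * (c ^ p - b ^ p) ^ 2 / (a ^ (2 * p + 2) * b ^ (2 * p))
      ≤ a ^ 2 * b ^ 2 * (p ^ 2 * a ^ 2 * (a + b) ^ (2 * p - 2)) /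
        (a ^ (2 * p + 2) * b ^ (2 * p)) := by gcongr
    _ = p ^ 2 * (a⁻¹ + b⁻¹) ^ (2 * p - 2) := hval

def euclideanCast {d : ℕ} : (Fin d → ℤ) →+ EuclideanSpace ℝ (Fin d) :=
  AddMonoidHom.mk' (fun k => WithLp.toLp 2 fun i => (k i : ℝ)) fun k h => by ext; simp

lemma euclideanCast_injective {d : ℕ} : Function.Injective (euclideanCast (d := d)) := by
  intro k h hkh
  ext i
  simpa [euclideanCast] using congr($hkh i)

lemma znorm_eq_norm_euclideanCast {d : ℕ} (k : Fin d → ℤ) : znorm k = ‖euclideanCast k‖ := by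
  simp [znorm, euclideanCast, EuclideanSpace.norm_eq]

lemma znorm_nonneg {d : ℕ} (k : Fin d → ℤ) : 0 ≤ znorm k := Real.sqrt_nonneg _

lemma znorm_pos {d : ℕ} {k : Fin d → ℤ} (hk : k ≠ 0) : 0 < znorm k := by
  rw [znorm_eq_norm_euclideanCast, norm_pos_iff]
  exact (map_ne_zero_iff _ euclideanCast_injective).2 hk

lemma abs_znorm_sub_znorm_sub_le {d : ℕ} (k h : Fin d → ℤ) :
    |znorm k - znorm (k - h)| ≤ znorm h := by
  simpa [znorm_eq_norm_euclideanCast] using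
    abs_norm_sub_norm_le (euclideanCast k) (euclideanCast (k - h))

lemma wedgeSq_sub_self {d : ℕ} (h k : Fin d → ℤ) : wedgeSq h (k - h) = wedgeSq h k := by
  simp only [wedgeSq, Pi.sub_apply, Int.cast_sub]
  have hsq : ∑ i, ((k i : ℝ) - h i) ^ 2 =
      ∑ i, (k i : ℝ) ^ 2 - 2 * ∑ i, (h i : ℝ) * k i + ∑ i, (h i : ℝ) ^ 2 := by
    rw [Finset.mul_sum, ← Finset.sum_sub_distrib, ← Finset.sum_add_distrib]
    exact Finset.sum_congr rfl fun i _ => by ring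
  have hmul : ∑ i, (h i : ℝ) * (k i - h i) = ∑ i, (h i : ℝ) * k i - ∑ i, (h i : ℝ) ^ 2 := by
    rw [← Finset.sum_sub_distrib]
    exact Finset.sum_congr rfl fun i _ => by ring
  rw [hsq, hmul]
  ring

lemma wedgeSq_le {d : ℕ} (h k : Fin d → ℤ) : wedgeSq h k ≤ znorm h ^ 2 * znorm k ^ 2 := by
  have hsq : ∀ m : Fin d → ℤ, znorm m ^ 2 = ∑ i, ((m i : ℝ)) ^ 2 :=
    fun m => Real.sq_sqrt (Finset.sum_nonneg fun i _ => sq_nonneg _)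
  rw [hsq, hsq, wedgeSq]
  linarith [sq_nonneg (∑ i, (h i : ℝ) * (k i : ℝ))]

lemma euclideanCast_mem_span {d : ℕ} (k : Fin d → ℤ) :
    euclideanCast k ∈
      Submodule.span ℤ (Set.range (EuclideanSpace.basisFun (Fin d) ℝ).toBasis) := by
  have : euclideanCast k = ∑ i, k i • (EuclideanSpace.basisFun (Fin d) ℝ).toBasis i := by
    ext j
    simp [euclideanCast, Pi.single_apply]
  rw [this]
  exact Submodule.sum_mem _ fun i _ => Submodule.smul_mem _ _ (Submodule.subset_span ⟨i, rfl⟩)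

lemma summable_znorm_rpow {d : ℕ} {r : ℝ} (hr : r < -d) :
    Summable fun k : Fin d → ℤ => znorm k ^ r := by
  set L := Submodule.span ℤ (Set.range (EuclideanSpace.basisFun (Fin d) ℝ).toBasis)
  have hrank : Module.finrank ℤ L = d := by
    rw [ZLattice.rank ℝ L, finrank_euclideanSpace_fin]
  have hL : Summable fun z : L => ‖z‖ ^ r := ZLattice.summable_norm_rpow L r (by rwa [hrank])
  have hinj : Function.Injective fun k => (⟨euclideanCast k, euclideanCast_mem_span k⟩ : L) :=
    fun k h hkh => euclideanCast_injective congr(($hkh : EuclideanSpace ℝ (Fin d)))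
  refine .of_nonneg_of_le (fun k => Real.rpow_nonneg (znorm_nonneg _) _) (fun k => ?_)
    (hL.comp_injective hinj)
  simp [znorm_eq_norm_euclideanCast]

lemma Gn_summand_le {d : ℕ} {n : ℝ} (hn : 1 ≤ n) {k h : Fin d → ℤ} (h0 : h ≠ 0) (hk : h ≠ k) :
    wedgeSq h k * (znorm k ^ n - znorm (k - h) ^ n) ^ 2 /
        (znorm h ^ (2 * n + 2) * znorm (k - h) ^ (2 * n)) ≤
      n ^ 2 * 2 ^ (2 * n - 2) * (znorm h ^ (-(2 * n - 2)) + znorm (k - h) ^ (-(2 * n - 2))) := by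
  have ha := znorm_pos h0
  have hb := znorm_pos (sub_ne_zero.2 hk.symm)
  have hW : wedgeSq h k ≤ znorm h ^ 2 * znorm (k - h) ^ 2 :=
    wedgeSq_sub_self h k ▸ wedgeSq_le h (k - h)
  refine (mul_sq_rpow_sub_rpow_div_le ha hb (znorm_nonneg k) hn
    (abs_znorm_sub_znorm_sub_le k h) hW).trans ?_
  rw [mul_assoc, Real.rpow_neg ha.le, Real.rpow_neg hb.le, ← Real.inv_rpow ha.le,
    ← Real.inv_rpow hb.le]
  gcongr
  exact add_rpow_le_two_rpow_mul_add_rpow (by positivity) (by positivity) (by linarith)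

lemma Gn_le {d : ℕ} {n : ℝ} (hn : 1 ≤ n) (k : Fin d → ℤ) :
    Gn d n k ≤ ENNReal.ofReal (n ^ 2 * 2 ^ (2 * n - 2)) *
      (2 * ∑' h : Fin d → ℤ, ENNReal.ofReal (znorm h ^ (-(2 * n - 2)))) := by
  set f : (Fin d → ℤ) → ENNReal := fun h => ENNReal.ofReal (znorm h ^ (-(2 * n - 2)))
  set C := n ^ 2 * 2 ^ (2 * n - 2)
  calc Gn d n k
      ≤ ∑' h : {h : Fin d → ℤ // h ≠ 0 ∧ h ≠ k}, ENNReal.ofReal C * (f h + f (k - h)) := by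
        refine ENNReal.tsum_le_tsum fun h => ?_
        simp only [f]
        rw [← ENNReal.ofReal_add (Real.rpow_nonneg (znorm_nonneg _) _)
          (Real.rpow_nonneg (znorm_nonneg _) _), ← ENNReal.ofReal_mul (by positivity)]
        exact ENNReal.ofReal_le_ofReal (Gn_summand_le hn h.2.1 h.2.2)
    _ ≤ ∑' h, ENNReal.ofReal C * (f h + f (k - h)) :=
        ENNReal.tsum_comp_le_tsum_of_injective Subtype.val_injective _
    _ = ENNReal.ofReal C * (2 * ∑' h, f h) := by
        have hshift : ∑' h, f (k - h) = ∑' h, f h := (Equiv.subLeft k).tsum_eq f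
        rw [ENNReal.tsum_mul_left, ENNReal.tsum_add, hshift, two_mul]

theorem stmt18_general (d : ℕ) (n : ℝ) (hn : (d : ℝ) / 2 + 1 < n) :
    (⨆ k : {k : Fin d → ℤ // k ≠ 0}, Gn d n k.1) < ⊤ := by
  have hn1 : 1 ≤ n := by linarith [(d.cast_nonneg : (0 : ℝ) ≤ d)]
  have hsum : Summable fun h : Fin d → ℤ => znorm h ^ (-(2 * n - 2)) :=
    summable_znorm_rpow (by linarith)
  refine (iSup_le fun k : {k : Fin d → ℤ // k ≠ 0} => Gn_le hn1 k.1).trans_lt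
    (ENNReal.mul_lt_top ENNReal.ofReal_lt_top ?_)
  rw [← ENNReal.ofReal_tsum_of_nonneg (fun h => Real.rpow_nonneg (znorm_nonneg _) _) hsum]
  exact ENNReal.mul_lt_top (by norm_num) ENNReal.ofReal_lt_top

/-- for `n > d/2 + 1`, `sup_{k ∈ ℤ^d_0} G_n(k) < ∞`. -/
theorem stmt18 (d : ℕ) (hd : 2 ≤ d) (n : ℝ) (hn : (d : ℝ) / 2 + 1 < n) :
    (⨆ k : {k : Fin d → ℤ // k ≠ 0}, Gn d n k.1) < ⊤ :=
  stmt18_general d n hn
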